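/- For every integer d ≥ 2 there exists a constant C > 0, depending only on d, such that for every integer N ≥ 3 and every eigenvalue μ of the discrete torus T^d_N with μ > 2(d−2) or μ < −2(d−2), the multiplicity satisfies m_{T^d_N}(μ) ≤ C. -/

import Mathlib

/-!
Fix a solution `b` of `∑ 2 cos (2π b_j / N) = μ`. For any other solution `a`, the `4d` roots of
unity `ζ^{± a_j}` and `-ζ^{± b_j}` (with `ζ = e^{2πi/N}`) sum to zero. By Mann's theorem, the
ratio of two terms of a minimal vanishing subsum of `n` roots of unity is a root of unity of
order dividing the primorial `n#`. Take a minimal vanishing subsum through `ζ^{a_j}` and, if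
`ζ^{-a_j}` is not in it, one through `ζ^{-a_j}` in the remaining terms. If both consisted of
`a`-terms only, they would cancel at least four of the `2d` unit terms summing to `μ`, so that
`|μ| ≤ 2d - 4`. Hence `ζ^{a_j}` lies within a `(4d)#`-th root of unity of some `-ζ^{± b_k}`, or
is a `2 (4d)#`-th root of unity: at most `(2d + 2) (4d)#` choices for each `j`.

Mann's theorem: let `m` be the least common order of the ratios `f i / f i₀`. If a prime `p ∣ m`
has `p² ∣ m` or exceeds the number of terms, Galois conjugation and discrete Fourier analysis
show that the terms whose exponent (to a primitive `m`-th root) is divisible by `p` already sum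
to zero. By minimality these are all the terms, so `m / p` is a common order. Hence `m` is
squarefree with prime factors at most the number of terms, and divides its primorial.
-/

/-- The multiplicity of `μ` as an eigenvalue of the discrete torus `T^d_N`:
the number of tuples `(k_1, …, k_d) ∈ {0, …, N-1}^d` with
`∑_j 2 cos(2π k_j / N) = μ`. -/
noncomputable def torusMult (N d : ℕ) (μ : ℝ) : ℕ :=
  Nat.card {k : Fin d → Fin N //
    (∑ j, 2 * Real.cos (2 * Real.pi * (k j : ℝ) / N)) = μ}

open Finset

variable {ι K : Type*}

theorem Squarefree.dvd_primorial_of_forall_primeFactors_le {m n : ℕ} (hm : Squarefree m)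
    (h : ∀ p ∈ m.primeFactors, p ≤ n) : m ∣ primorial n := by
  rw [← Nat.prod_primeFactors_of_squarefree hm]
  exact prod_dvd_prod_of_subset _ _ _ fun p hp =>
    mem_filter.2 ⟨mem_range.2 (Nat.lt_succ_of_le (h p hp)), Nat.prime_of_mem_primeFactors hp⟩

theorem Nat.coprime_one_add_mul_div_of_not_dvd {m p k : ℕ} (hp : p.Prime) (hpm : p ∣ m)
    (h : ¬p ∣ 1 + k * (m / p)) : Nat.Coprime (1 + k * (m / p)) m := by
  refine Nat.coprime_of_dvd fun q hq hqk hqm => ?_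
  rcases eq_or_ne q p with rfl | hqp
  · exact h hqk
  have hqc : q ∣ m / p := by
    rw [← Nat.mul_div_cancel' hpm] at hqm
    exact (hq.dvd_mul.1 hqm).resolve_left fun h' => hqp ((Nat.prime_dvd_prime_iff_eq hq hp).1 h')
  exact hq.one_lt.ne' (Nat.dvd_one.1 ((Nat.dvd_add_left (hqc.mul_left k)).1 hqk))

theorem Nat.eq_of_prime_dvd_one_add_mul {p c k k' : ℕ} (hp : p.Prime) (hk : k < p) (hk' : k' < p)
    (h : p ∣ 1 + k * c) (h' : p ∣ 1 + k' * c) : k = k' := by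
  have := Fact.mk hp
  rw [← ZMod.natCast_eq_zero_iff] at h h'
  push_cast at h h'
  have hc : (c : ZMod p) ≠ 0 := fun hc => by simp [hc] at h
  have : (k : ZMod p) = k' := mul_right_cancel₀ hc (by linear_combination h - h')
  rw [ZMod.natCast_eq_natCast_iff', Nat.mod_eq_of_lt hk, Nat.mod_eq_of_lt hk'] at this
  exact this

theorem exists_lt_forall_not_dvd_add {p : ℕ} (hp : p ≠ 0) {T : Finset ι} (hT : #T < p)
    (t : ι → ℕ) : ∃ s < p, ∀ j ∈ T, ¬p ∣ t j + s := by
  have := NeZero.mk hp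
  obtain ⟨r, -, hr⟩ := exists_mem_notMem_of_card_lt_card
    (s := T.image fun j => -(t j : ZMod p)) (t := univ)
    (card_image_le.trans_lt (by simpa using hT))
  refine ⟨r.val, r.val_lt, fun j hj hdvd => hr (mem_image.2 ⟨j, hj, ?_⟩)⟩
  rw [← ZMod.natCast_eq_zero_iff] at hdvd
  push_cast at hdvd
  rw [ZMod.natCast_zmod_val] at hdvd
  exact neg_eq_of_add_eq_zero_right hdvd

namespace IsPrimitiveRoot

variable [CommRing K] [IsDomain K]

open Polynomial in
theorem sum_pow_mul_eq_zero_of_coprime [CharZero K] {ζ : K} {m : ℕ}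
    (hζ : IsPrimitiveRoot ζ m) {T : Finset ι} {t : ι → ℕ} (h : ∑ j ∈ T, ζ ^ t j = 0) {u : ℕ}
    (hu : u.Coprime m) : ∑ j ∈ T, ζ ^ (u * t j) = 0 := by
  rcases m.eq_zero_or_pos with rfl | hm
  · simpa [(Nat.coprime_zero_right u).1 hu] using h
  have hR : aeval ζ (∑ j ∈ T, X ^ t j : ℤ[X]) = 0 := by simpa using h
  obtain ⟨Q, hQ⟩ :=
    hζ.minpoly_eq_pow_coprime hu ▸ minpoly.isIntegrallyClosed_dvd (hζ.isIntegral hm) hR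
  simpa [minpoly.aeval, pow_mul] using congrArg (aeval (ζ ^ u)) hQ

theorem sum_range_pow_mul {w : K} {p : ℕ} (hw : IsPrimitiveRoot w p) (n : ℕ) :
    ∑ k ∈ range p, w ^ (k * n) = if p ∣ n then (p : K) else 0 := by
  split_ifs with hpn
  · simp [pow_mul', (hw.pow_eq_one_iff_dvd n).2 hpn]
  · have hne : w ^ n - 1 ≠ 0 := sub_ne_zero.2 fun h => hpn ((hw.pow_eq_one_iff_dvd n).1 h)
    refine (mul_eq_zero.1 ?_).resolve_right hne
    simp_rw [pow_mul']
    rw [geom_sum_mul, ← pow_mul, mul_comm, pow_mul, hw.pow_eq_one, one_pow, sub_self]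

theorem sum_range_pow_mul_sum {w : K} {p : ℕ} (hw : IsPrimitiveRoot w p) (T : Finset ι)
    (x : ι → K) (t : ι → ℕ) (s : ℕ) :
    ∑ k ∈ range p, w ^ (k * s) * ∑ j ∈ T, x j * w ^ (k * t j) =
      p * ∑ j ∈ T with p ∣ t j + s, x j := by
  simp_rw [mul_sum, sum_filter]
  rw [sum_comm]
  refine sum_congr rfl fun j _ => ?_
  simp_rw [mul_left_comm _ (x j), ← mul_sum, ← pow_add, ← mul_add, add_comm s,
    hw.sum_range_pow_mul]
  split_ifs <;> ring

/- Twisting by the primitive `p`-th root `ζ ^ (m / p)` is the Galois conjugation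
`ζ ↦ ζ ^ (1 + k * (m / p))`, available for every `k < p` except at most one. Fourier inversion
over `k` isolates the exponents divisible by `p`; when `#T < p` some residue class mod `p` is
empty, which rules out the exceptional `k`. -/
theorem sum_filter_prime_dvd_eq_zero [CharZero K] {ζ : K} {m p : ℕ} (hζ : IsPrimitiveRoot ζ m)
    (hm : 0 < m) (hp : p.Prime) (hpm : p ∣ m) {T : Finset ι} (hpT : p ^ 2 ∣ m ∨ #T < p)
    {t : ι → ℕ} (h : ∑ j ∈ T, ζ ^ t j = 0) : ∑ j ∈ T with p ∣ t j, ζ ^ t j = 0 := by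
  set c := m / p
  have hw : IsPrimitiveRoot (ζ ^ c) p := by
    have := hζ.pow_of_dvd (Nat.div_pos (Nat.le_of_dvd hm hpm) hp.pos).ne' (Nat.div_dvd_of_dvd hpm)
    rwa [Nat.div_div_self hpm hm.ne'] at this
  have htwist : ∀ k, ¬p ∣ 1 + k * c → ∑ j ∈ T, ζ ^ t j * (ζ ^ c) ^ (k * t j) = 0 := by
    intro k hk
    rw [← hζ.sum_pow_mul_eq_zero_of_coprime h (Nat.coprime_one_add_mul_div_of_not_dvd hp hpm hk)]
    exact sum_congr rfl fun j _ => by ring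
  have hall : ∀ k < p, ∑ j ∈ T, ζ ^ t j * (ζ ^ c) ^ (k * t j) = 0 := by
    by_contra! ⟨k₀, hk₀, hne⟩
    have hk₀p : p ∣ 1 + k₀ * c := not_not.1 (mt (htwist k₀) hne)
    have hpc : ¬p ∣ c := fun hpc =>
      hp.one_lt.ne' (Nat.dvd_one.1 ((Nat.dvd_add_left (hpc.mul_left k₀)).1 hk₀p))
    have hT : #T < p := hpT.resolve_left fun h2 => hpc (Nat.dvd_div_of_mul_dvd (by rwa [← sq]))
    obtain ⟨s, -, hs⟩ := exists_lt_forall_not_dvd_add hp.ne_zero hT t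
    have hother : ∀ k ∈ range p, k ≠ k₀ → ∑ j ∈ T, ζ ^ t j * (ζ ^ c) ^ (k * t j) = 0 :=
      fun k hk hkk₀ => htwist k fun hkp =>
        hkk₀ (Nat.eq_of_prime_dvd_one_add_mul hp (mem_range.1 hk) hk₀ hkp hk₀p)
    have hinv := hw.sum_range_pow_mul_sum T (fun j => ζ ^ t j) t s
    rw [filter_false_of_mem hs, sum_empty, mul_zero, sum_eq_single_of_mem k₀ (mem_range.2 hk₀)
      fun k hk hkk₀ => by rw [hother k hk hkk₀, mul_zero]] at hinv
    exact hne ((mul_eq_zero.1 hinv).resolve_left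
      (pow_ne_zero _ (pow_ne_zero _ (hζ.ne_zero hm.ne'))))
  have hinv := hw.sum_range_pow_mul_sum T (fun j => ζ ^ t j) t 0
  simp only [add_zero, mul_zero, pow_zero, one_mul] at hinv
  rw [sum_eq_zero fun k hk => hall k (mem_range.1 hk)] at hinv
  exact (mul_eq_zero.1 hinv.symm).resolve_left (Nat.cast_ne_zero.2 hp.ne_zero)

end IsPrimitiveRoot

def IsMinimalVanishing [AddCommMonoid K] (f : ι → K) (S : Finset ι) : Prop :=
  Minimal (fun S : Finset ι => S.Nonempty ∧ ∑ i ∈ S, f i = 0) S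

theorem exists_isMinimalVanishing_mem [AddCommGroup K] [DecidableEq ι] {f : ι → K}
    {T : Finset ι} (hT : ∑ i ∈ T, f i = 0) {i : ι} (hi : i ∈ T) :
    ∃ S ⊆ T, i ∈ S ∧ IsMinimalVanishing f S := by
  obtain ⟨S, hST, ⟨hiS, hS0⟩, hSmin⟩ :=
    exists_minimal_le_of_wellFoundedLT (fun S : Finset ι => i ∈ S ∧ ∑ j ∈ S, f j = 0) T ⟨hi, hT⟩
  refine ⟨S, hST, hiS, ⟨⟨i, hiS⟩, hS0⟩, fun S' ⟨⟨x, hx⟩, hS'0⟩ hS'S => ?_⟩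
  by_cases hiS' : i ∈ S'
  · exact hSmin ⟨hiS', hS'0⟩ hS'S
  -- otherwise `S \ S'` is a smaller vanishing set containing `i`
  have hsd : ∑ j ∈ S \ S', f j = 0 := by rw [sum_sdiff_eq_sub hS'S, hS0, hS'0, sub_self]
  exact absurd hx (mem_sdiff.1 (hSmin ⟨mem_sdiff.2 ⟨hiS, hiS'⟩, hsd⟩ sdiff_subset (hS'S hx))).2

namespace IsMinimalVanishing

theorem one_lt_card [AddCommMonoid K] {f : ι → K} {S : Finset ι} (hS : IsMinimalVanishing f S)
    (hf : ∀ i ∈ S, f i ≠ 0) : 1 < #S := by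
  rcases hS.1.1.exists_eq_singleton_or_nontrivial with ⟨i, rfl⟩ | hnt
  · exact absurd (by simpa using hS.1.2) (hf i (mem_singleton_self i))
  · exact one_lt_card_iff_nontrivial.2 hnt

theorem eq_of_subset [AddCommMonoid K] {f : ι → K} {S S' : Finset ι}
    (hS : IsMinimalVanishing f S) (hS' : S'.Nonempty) (hS'0 : ∑ i ∈ S', f i = 0) (h : S' ⊆ S) :
    S' = S :=
  Minimal.eq_of_le hS ⟨hS', hS'0⟩ h

theorem div_const [DivisionRing K] {f : ι → K} {S : Finset ι} (hS : IsMinimalVanishing f S)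
    {c : K} (hc : c ≠ 0) : IsMinimalVanishing (fun i => f i / c) S := by
  have : (fun S : Finset ι => S.Nonempty ∧ ∑ i ∈ S, f i / c = 0) =
      fun S => S.Nonempty ∧ ∑ i ∈ S, f i = 0 := by
    funext S
    simp [← sum_div, hc]
  unfold IsMinimalVanishing
  rwa [this]

theorem pow_div_prime_eq_one [CommRing K] [IsDomain K] [CharZero K] {g : ι → K} {T : Finset ι}
    (hT : IsMinimalVanishing g T) {ζ : K} {m p : ℕ} (hζ : IsPrimitiveRoot ζ m)
    (hg : ∀ j ∈ T, g j ^ m = 1) {i₀ : ι} (hi₀ : i₀ ∈ T) (hg₀ : g i₀ = 1) (hp : p.Prime)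
    (hpm : p ∣ m) (hpT : p ^ 2 ∣ m ∨ #T < p) : ∀ j ∈ T, g j ^ (m / p) = 1 := by
  rcases Nat.eq_zero_or_pos m with rfl | hm
  · simp
  have := NeZero.of_pos hm
  choose! t ht using fun j hj => (hζ.eq_pow_of_pow_eq_one (hg j hj)).imp fun _ h => h.2
  have hsum : ∑ j ∈ T, ζ ^ t j = 0 := (sum_congr rfl ht).trans hT.1.2
  have hfilter : T.filter (fun j => p ∣ t j) = T := by
    refine hT.eq_of_subset ⟨i₀, mem_filter.2 ⟨hi₀, ?_⟩⟩ ?_ (filter_subset _ _)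
    · exact hpm.trans ((hζ.pow_eq_one_iff_dvd _).1 ((ht i₀ hi₀).trans hg₀))
    · rw [← sum_congr rfl fun j hj => ht j (mem_filter.1 hj).1]
      exact hζ.sum_filter_prime_dvd_eq_zero hm hp hpm hpT hsum
  intro j hj
  obtain ⟨s, hs⟩ := (mem_filter.1 (hfilter ▸ hj)).2
  rw [← ht j hj, hs, ← pow_mul, mul_assoc, mul_left_comm, Nat.mul_div_cancel' hpm, pow_mul',
    hζ.pow_eq_one, one_pow]

theorem div_pow_primorial_eq_one {f : ι → ℂ} {T : Finset ι} (hT : IsMinimalVanishing f T)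
    {n : ℕ} (hn : 0 < n) (hf : ∀ i ∈ T, f i ^ n = 1) {i i₀ : ι} (hi : i ∈ T) (hi₀ : i₀ ∈ T) :
    (f i / f i₀) ^ primorial #T = 1 := by
  have hf₀ : f i₀ ≠ 0 := fun h => by simpa [h, hn.ne'] using hf i₀ hi₀
  have hg := hT.div_const hf₀
  have hex : ∃ m, 0 < m ∧ ∀ j ∈ T, (f j / f i₀) ^ m = 1 :=
    ⟨n, hn, fun j hj => by rw [div_pow, hf j hj, hf i₀ hi₀, div_one]⟩
  obtain ⟨hm, hgm⟩ := Nat.find_spec hex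
  have hprime : ∀ p, p.Prime → p ∣ Nat.find hex → ¬(p ^ 2 ∣ Nat.find hex ∨ #T < p) :=
    fun p hp hpm hpT => (Nat.div_lt_self hm hp.one_lt).not_ge <| Nat.find_min' hex
      ⟨Nat.div_pos (Nat.le_of_dvd hm hpm) hp.pos, hg.pow_div_prime_eq_one
        (Complex.isPrimitiveRoot_exp _ hm.ne') hgm hi₀ (div_self hf₀) hp hpm hpT⟩
  have hsq : Squarefree (Nat.find hex) := Nat.squarefree_iff_prime_squarefree.2
    fun p hp hpp => hprime p hp (dvd_of_mul_left_dvd hpp) (Or.inl (by rwa [sq]))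
  obtain ⟨c, hc⟩ := hsq.dvd_primorial_of_forall_primeFactors_le fun p hp =>
    not_lt.1 fun hlt => hprime p (Nat.prime_of_mem_primeFactors hp) (Nat.dvd_of_mem_primeFactors hp)
      (Or.inr hlt)
  rw [hc, pow_mul, hgm i hi, one_pow]

end IsMinimalVanishing

theorem norm_sum_le_card_sub_card {E : Type*} [SeminormedAddCommGroup E] [DecidableEq ι]
    {F : ι → E} {A W : Finset ι} (hWA : W ⊆ A) (hF : ∀ i ∈ A, ‖F i‖ ≤ 1)
    (hW : ∑ i ∈ W, F i = 0) : ‖∑ i ∈ A, F i‖ ≤ #A - #W := by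
  rw [← sum_sdiff hWA, hW, add_zero, ← Nat.cast_sub (card_le_card hWA), ← card_sdiff_of_subset hWA]
  simpa using (norm_sum_le _ _).trans
    (sum_le_card_nsmul _ _ _ fun i hi => hF i (mem_sdiff.1 hi).1)

theorem exists_pow_div_eq_one_of_card_sub_four_lt_norm [Fintype ι] [DecidableEq ι] {F : ι → ℂ}
    {n : ℕ} (hn : 0 < n) (hF : ∀ i, F i ^ n = 1) (hsum : ∑ i, F i = 0) {A : Finset ι}
    (hA : (#A : ℝ) - 4 < ‖∑ i ∈ A, F i‖) (a₁ a₂ : ι) :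
    (∃ i ∉ A, (F a₁ / F i) ^ primorial (Fintype.card ι) = 1 ∨
      (F a₂ / F i) ^ primorial (Fintype.card ι) = 1) ∨
      (F a₁ / F a₂) ^ primorial (Fintype.card ι) = 1 := by
  have hratio : ∀ S, IsMinimalVanishing F S → ∀ i ∈ S, ∀ i' ∈ S,
      (F i / F i') ^ primorial (Fintype.card ι) = 1 := fun S hS i hi i' hi' => by
    obtain ⟨c, hc⟩ := primorial_dvd_primorial (card_le_univ S)
    rw [hc, pow_mul, hS.div_pow_primorial_eq_one hn (fun i _ => hF i) hi hi', one_pow]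
  obtain ⟨S₁, -, h₁, hS₁⟩ := exists_isMinimalVanishing_mem hsum (mem_univ a₁)
  by_cases hS₁A : S₁ ⊆ A
  swap
  · obtain ⟨i, hi, hiA⟩ := not_subset.1 hS₁A
    exact Or.inl ⟨i, hiA, Or.inl (hratio S₁ hS₁ _ h₁ _ hi)⟩
  by_cases h₂S₁ : a₂ ∈ S₁
  · exact Or.inr (hratio S₁ hS₁ _ h₁ _ h₂S₁)
  have hrest : ∑ i ∈ univ \ S₁, F i = 0 := by
    rw [sum_sdiff_eq_sub (subset_univ _), hsum, hS₁.1.2, sub_self]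
  obtain ⟨S₂, hS₂S₁, h₂, hS₂⟩ :=
    exists_isMinimalVanishing_mem hrest (mem_sdiff.2 ⟨mem_univ _, h₂S₁⟩)
  by_cases hS₂A : S₂ ⊆ A
  swap
  · obtain ⟨i, hi, hiA⟩ := not_subset.1 hS₂A
    exact Or.inl ⟨i, hiA, Or.inr (hratio S₂ hS₂ _ h₂ _ hi)⟩
  -- `S₁ ∪ S₂ ⊆ A` cancels at least four of the unit terms summed over `A`
  exfalso
  have hF0 : ∀ i, F i ≠ 0 := fun i h => by simpa [h, hn.ne'] using hF i
  have hdisj : Disjoint S₁ S₂ := disjoint_of_subset_right hS₂S₁ disjoint_sdiff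
  have hcard : 4 ≤ #(S₁ ∪ S₂) := by
    have := hS₁.one_lt_card fun i _ => hF0 i
    have := hS₂.one_lt_card fun i _ => hF0 i
    rw [card_union_of_disjoint hdisj]
    omega
  have hle := norm_sum_le_card_sub_card (union_subset hS₁A hS₂A)
    (fun i _ => (Complex.norm_eq_one_of_pow_eq_one (hF i) hn.ne').le)
    (by rw [sum_union hdisj, hS₁.1.2, hS₂.1.2, add_zero])
  have : (4 : ℝ) ≤ #(S₁ ∪ S₂) := by exact_mod_cast hcard
  linarith

open Real Complex in
noncomputable def torusRoots (N d : ℕ) (k : Fin d → Fin N) (x : Fin d × Bool) : ℂ :=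
  if x.2 then exp (2 * π * I / N) ^ (k x.1 : ℕ) else (exp (2 * π * I / N) ^ (k x.1 : ℕ))⁻¹

theorem torusRoots_pow_eq_one {N d : ℕ} (hN : N ≠ 0) (k : Fin d → Fin N) (x : Fin d × Bool) :
    torusRoots N d k x ^ N = 1 := by
  have h := (Complex.isPrimitiveRoot_exp N hN).pow_eq_one
  unfold torusRoots
  split_ifs <;> simp [← pow_mul, pow_mul', h]

theorem torusRoots_swap (N d : ℕ) (k : Fin d → Fin N) (j : Fin d) (s : Bool) :
    torusRoots N d k (j, !s) = (torusRoots N d k (j, s))⁻¹ := by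
  cases s <;> simp [torusRoots]

open Real Complex in
theorem sum_torusRoots (N d : ℕ) (k : Fin d → Fin N) :
    ∑ x, torusRoots N d k x = ((∑ j, 2 * Real.cos (2 * π * (k j : ℝ) / N) : ℝ) : ℂ) := by
  rw [Fintype.sum_prod_type]
  push_cast
  refine sum_congr rfl fun j _ => ?_
  have : exp (2 * π * I / N) ^ (k j : ℕ) = exp (2 * π * (k j : ℕ) / N * I) := by
    rw [← Complex.exp_nat_mul]
    ring_nf
  rw [Fintype.sum_bool, two_cos, neg_mul, Complex.exp_neg, ← this]
  simp [torusRoots]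

open Polynomial in
noncomputable def pinSet {β : Type*} [Fintype β] (c : β → ℂ) (M : ℕ) : Finset ℂ :=
  (univ ×ˢ nthRootsFinset M (1 : ℂ)).image (fun q => c q.1 * q.2) ∪ nthRootsFinset (2 * M) (1 : ℂ)

section pinSet

open Polynomial

variable {β : Type*} [Fintype β] {M : ℕ}

theorem card_pinSet_le (c : β → ℂ) (M : ℕ) : #(pinSet c M) ≤ Fintype.card β * M + 2 * M := by
  have hroots : ∀ n, #(nthRootsFinset n (1 : ℂ)) ≤ n := fun n =>
    (Multiset.toFinset_card_le _).trans (card_nthRoots n 1)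
  refine (card_union_le _ _).trans (add_le_add ?_ (hroots _))
  exact card_image_le.trans <| by
    rw [card_product, card_univ]
    exact Nat.mul_le_mul_left _ (hroots M)

theorem mem_pinSet_of_pow_div_eq_one {c : β → ℂ} (hM : 0 < M) {b : β} (hc : c b ≠ 0) {z : ℂ}
    (h : (z / c b) ^ M = 1) : z ∈ pinSet c M :=
  mem_union_left _ (mem_image.2 ⟨(b, z / c b),
    mem_product.2 ⟨mem_univ _, (mem_nthRootsFinset hM 1).2 h⟩, mul_div_cancel₀ z hc⟩)

theorem mem_pinSet_of_pow_eq_one {c : β → ℂ} (hM : 0 < M) {z : ℂ} (h : z ^ (2 * M) = 1) :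
    z ∈ pinSet c M :=
  mem_union_right _ ((mem_nthRootsFinset (by omega) 1).2 h)

end pinSet

open Real in
theorem exists_torusRoots_div_pow_eq_one {N d : ℕ} (hN : N ≠ 0) {μ : ℝ}
    (hμ : 2 * ((d : ℝ) - 2) < |μ|) {a b : Fin d → Fin N}
    (ha : ∑ j, 2 * Real.cos (2 * π * (a j : ℝ) / N) = μ)
    (hb : ∑ j, 2 * Real.cos (2 * π * (b j : ℝ) / N) = μ) (j : Fin d) :
    (∃ x, (torusRoots N d a (j, true) / -torusRoots N d b x) ^ primorial (4 * d) = 1 ∨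
      (torusRoots N d a (j, false) / -torusRoots N d b x) ^ primorial (4 * d) = 1) ∨
      (torusRoots N d a (j, true) / torusRoots N d a (j, false)) ^ primorial (4 * d) = 1 := by
  set F : (Fin d × Bool) ⊕ (Fin d × Bool) → ℂ :=
    Sum.elim (torusRoots N d a) fun x => -torusRoots N d b x
  have hF : ∀ i, F i ^ (2 * N) = 1 := by
    rintro (x | x) <;>
      simp only [F, Sum.elim_inl, Sum.elim_inr, (even_two_mul N).neg_pow, pow_mul',
        torusRoots_pow_eq_one hN, one_pow]
  have hsum : ∑ i, F i = 0 := by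
    simp [F, Fintype.sum_sum_type, sum_torusRoots, ha, hb]
  set A := (univ : Finset (Fin d × Bool)).map (.inl (β := Fin d × Bool))
  have hA : (#A : ℝ) - 4 < ‖∑ i ∈ A, F i‖ := by
    simp only [A, F, sum_map, card_map, card_univ, Fintype.card_prod, Fintype.card_fin,
      Fintype.card_bool, Function.Embedding.inl_apply, Sum.elim_inl, sum_torusRoots, ha,
      Complex.norm_real, Real.norm_eq_abs]
    push_cast
    linarith
  have hcard : Fintype.card ((Fin d × Bool) ⊕ (Fin d × Bool)) = 4 * d := by simp; ring
  rcases exists_pow_div_eq_one_of_card_sub_four_lt_norm (by omega) hF hsum hA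
    (.inl (j, true)) (.inl (j, false)) with ⟨(x | x), hx, h⟩ | h
  · exact absurd (mem_map_of_mem _ (mem_univ x)) hx
  · exact Or.inl ⟨x, by simpa only [hcard, F, Sum.elim_inl, Sum.elim_inr] using h⟩
  · exact Or.inr (by simpa only [hcard, F, Sum.elim_inl] using h)

open Real Complex in
theorem exp_pow_mem_pinSet {N d : ℕ} (hN : N ≠ 0) {μ : ℝ} (hμ : 2 * ((d : ℝ) - 2) < |μ|)
    {a b : Fin d → Fin N} (ha : ∑ j, 2 * Real.cos (2 * π * (a j : ℝ) / N) = μ)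
    (hb : ∑ j, 2 * Real.cos (2 * π * (b j : ℝ) / N) = μ) (j : Fin d) :
    exp (2 * π * I / N) ^ (a j : ℕ) ∈
      pinSet (fun x => -torusRoots N d b x) (primorial (4 * d)) := by
  have hM := primorial_pos (4 * d)
  have hb0 : ∀ x, -torusRoots N d b x ≠ 0 := fun x h => by
    simpa [neg_eq_zero.1 h, hN] using torusRoots_pow_eq_one hN b x
  have key := exists_torusRoots_div_pow_eq_one hN hμ ha hb j
  rw [show torusRoots N d a (j, true) = exp (2 * π * I / N) ^ (a j : ℕ) by simp [torusRoots],
    show torusRoots N d a (j, false) = (exp (2 * π * I / N) ^ (a j : ℕ))⁻¹ by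
      simp [torusRoots]] at key
  set z := exp (2 * π * I / N) ^ (a j : ℕ)
  rcases key with ⟨⟨k, s⟩, h | h⟩ | h
  · exact mem_pinSet_of_pow_div_eq_one (b := (k, s)) hM (hb0 _) h
  · refine mem_pinSet_of_pow_div_eq_one (b := (k, !s)) hM (hb0 _) ?_
    have : z / -(torusRoots N d b (k, s))⁻¹ = (z⁻¹ / -torusRoots N d b (k, s))⁻¹ := by
      rw [inv_div, neg_inv, div_inv_eq_mul, div_inv_eq_mul, mul_comm]
    rw [torusRoots_swap, this, inv_pow, h, inv_one]
  · refine mem_pinSet_of_pow_eq_one hM ?_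
    rwa [div_inv_eq_mul, ← sq, ← pow_mul] at h

theorem mult_bounded_of_extreme_eigenvalue_general (d : ℕ) :
    ∃ C : ℕ, 0 < C ∧ ∀ N : ℕ, 3 ≤ N → ∀ μ : ℝ, 1 ≤ torusMult N d μ →
      (2 * ((d : ℝ) - 2) < μ ∨ μ < -(2 * ((d : ℝ) - 2))) →
      torusMult N d μ ≤ C := by
  have hM := primorial_pos (4 * d)
  refine ⟨(2 * d * primorial (4 * d) + 2 * primorial (4 * d)) ^ d, pow_pos (by nlinarith) d,
    fun N hN μ hμ hext => ?_⟩
  obtain ⟨⟨b, hb⟩⟩ := Nat.card_pos_iff.1 hμ |>.1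
  have habs : 2 * ((d : ℝ) - 2) < |μ| := by
    rcases hext with h | h
    exacts [h.trans_le (le_abs_self μ), by linarith [neg_le_abs μ]]
  have hζ := Complex.isPrimitiveRoot_exp N (by omega)
  set P := pinSet (fun x => -torusRoots N d b x) (primorial (4 * d))
  have hinj : Function.Injective fun k : {k : Fin d → Fin N //
      ∑ j, 2 * Real.cos (2 * Real.pi * (k j : ℝ) / N) = μ} =>
      fun j => (⟨_, exp_pow_mem_pinSet (by omega) habs k.2 hb j⟩ : P) := fun k k' h => by
    ext j
    exact hζ.pow_inj (k.1 j).isLt (k'.1 j).isLt (congrArg Subtype.val (congrFun h j))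
  calc torusMult N d μ ≤ Nat.card (Fin d → P) := Nat.card_le_card_of_injective _ hinj
    _ = #P ^ d := by simp [Nat.card_eq_fintype_card]
    _ ≤ _ := Nat.pow_le_pow_left ((card_pinSet_le _ _).trans (le_of_eq (by
      rw [Fintype.card_prod, Fintype.card_fin, Fintype.card_bool]; ring))) d

theorem mult_bounded_of_extreme_eigenvalue (d : ℕ) (hd : 2 ≤ d) :
    ∃ C : ℕ, 0 < C ∧ ∀ N : ℕ, 3 ≤ N → ∀ μ : ℝ, 1 ≤ torusMult N d μ →
      (2 * ((d : ℝ) - 2) < μ ∨ μ < -(2 * ((d : ℝ) - 2))) →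
      torusMult N d μ ≤ C :=
  mult_bounded_of_extreme_eigenvalue_general d
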